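/- For all real x with 0 ≤ x ≤ 1, Φ_{00}(x) = 1 − x; and for every natural number l ≥ 1 and all real x with 0 ≤ x ≤ 1, Φ_{l0}(x) = ( P_{l−1}(2x − 1) − P_{l+1}(2x − 1) ) / ( 2 √(2l+1) ). -/

import Mathlib

open Real MeasureTheory

/-- The degree-`k` Legendre polynomial via the Rodrigues formula
`P_k(t) = (1/(2^k k!)) (d/dt)^k (t² - 1)^k`. -/
noncomputable def legendreP (k : ℕ) (t : ℝ) : ℝ :=
  (1 / ((2 : ℝ) ^ k * (Nat.factorial k : ℝ))) *
    (Polynomial.derivative^[k] (((Polynomial.X : Polynomial ℝ) ^ 2 - 1) ^ k)).eval t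

/-- The scaling functions `φ_k(x) = √(2k+1) P_k(2x-1)` on `[0,1]`, extended by zero. -/
noncomputable def scalingFn (k : ℕ) (x : ℝ) : ℝ :=
  if x ∈ Set.Icc (0:ℝ) 1 then Real.sqrt (2 * (k : ℝ) + 1) * legendreP k (2 * x - 1) else 0

/-- The cross-correlation functions `Φ_{ii'}(x) = ∫ φ_i(x+y) φ_{i'}(y) dy`. -/
noncomputable def crossCorr (i i' : ℕ) (x : ℝ) : ℝ :=
  ∫ y : ℝ, scalingFn i (x + y) * scalingFn i' y

/-!
On `[0, 1]` the substitution `t = 2(x + y) - 1` gives `Φ_{l0}(x) = (√(2l+1) / 2) ∫_{2x-1}^1 P_l`.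
By the Rodrigues formula, `Dᵐ (t² - 1)ᵐ⁺¹ / (2ᵐ⁺¹ (m+1)!)` is an antiderivative of `P_{m+1}`; it
vanishes at `t = 1`, a root of order `m + 1` of `(t² - 1)ᵐ⁺¹`. Differentiating `(t² - 1)ᵐ⁺²`
twice and then `m` more times identifies it with `(P_{m+2} - P_m) / (2m + 3)`.
-/

open Polynomial
open scoped Nat

section Rodrigues

variable {R : Type*} [CommRing R]

lemma derivative_X_sq_sub_one_pow_succ (n : ℕ) :
    derivative (((X : R[X]) ^ 2 - 1) ^ (n + 1)) = (2 * n + 2) • (X * (X ^ 2 - 1) ^ n) := by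
  rw [derivative_pow, derivative_sub, derivative_X_pow, derivative_one, nsmul_eq_mul,
    C_eq_natCast, C_eq_natCast]
  push_cast
  ring

-- The point is `X² (X² - 1)ⁿ = (X² - 1)ⁿ⁺¹ + (X² - 1)ⁿ`.
lemma derivative_derivative_X_sq_sub_one_pow_add_two (n : ℕ) :
    derivative (derivative (((X : R[X]) ^ 2 - 1) ^ (n + 2))) =
      (2 * n + 4) • ((2 * n + 3) • (X ^ 2 - 1) ^ (n + 1) + (2 * n + 2) • (X ^ 2 - 1) ^ n) := by
  rw [derivative_X_sq_sub_one_pow_succ, derivative_smul, derivative_mul, derivative_X,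
    derivative_X_sq_sub_one_pow_succ]
  simp only [nsmul_eq_mul]
  push_cast
  ring

lemma iterate_derivative_X_sq_sub_one_pow_add_two (n : ℕ) :
    derivative^[n + 2] (((X : R[X]) ^ 2 - 1) ^ (n + 2)) =
      (2 * n + 4) • ((2 * n + 3) • derivative^[n] ((X ^ 2 - 1) ^ (n + 1)) +
        (2 * n + 2) • derivative^[n] ((X ^ 2 - 1) ^ n)) := by
  rw [Function.iterate_add_apply]
  change derivative^[n] (derivative (derivative _)) = _
  rw [derivative_derivative_X_sq_sub_one_pow_add_two, iterate_derivative_smul, iterate_map_add,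
    iterate_derivative_smul, iterate_derivative_smul]

lemma eval_one_iterate_derivative_X_sq_sub_one_pow_succ (n : ℕ) :
    (derivative^[n] (((X : R[X]) ^ 2 - 1) ^ (n + 1))).eval 1 = 0 := by
  have hdvd : (X - C 1) ^ (n + 1) ∣ ((X : R[X]) ^ 2 - 1) ^ (n + 1) :=
    pow_dvd_pow_of_dvd ⟨X + 1, by rw [C_1]; ring⟩ _
  have := pow_sub_dvd_iterate_derivative_of_pow_dvd n hdvd
  rwa [Nat.add_sub_cancel_left, pow_one, dvd_iff_isRoot] at this

end Rodrigues

lemma legendreP_zero (t : ℝ) : legendreP 0 t = 1 := by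
  simp [legendreP]

noncomputable def legendreAntideriv (m : ℕ) (t : ℝ) : ℝ :=
  (derivative^[m] (((X : ℝ[X]) ^ 2 - 1) ^ (m + 1))).eval t / (2 ^ (m + 1) * (m + 1)!)

lemma hasDerivAt_legendreAntideriv (m : ℕ) (t : ℝ) :
    HasDerivAt (legendreAntideriv m) (legendreP (m + 1) t) t := by
  have h := (Polynomial.hasDerivAt (derivative^[m] (((X : ℝ[X]) ^ 2 - 1) ^ (m + 1))) t).div_const
    (2 ^ (m + 1) * (m + 1)! : ℝ)
  rw [← Function.iterate_succ_apply' derivative] at h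
  rwa [legendreP, one_div_mul_eq_div]

lemma legendreAntideriv_one (m : ℕ) : legendreAntideriv m 1 = 0 := by
  rw [legendreAntideriv, eval_one_iterate_derivative_X_sq_sub_one_pow_succ, zero_div]

lemma legendreP_add_two_sub_legendreP (m : ℕ) (t : ℝ) :
    legendreP (m + 2) t - legendreP m t = (2 * m + 3) * legendreAntideriv m t := by
  rw [legendreP, iterate_derivative_X_sq_sub_one_pow_add_two, legendreP, legendreAntideriv,
    eval_smul, eval_add, eval_smul, eval_smul]
  simp only [nsmul_eq_mul, Nat.factorial_succ]
  push_cast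
  field_simp
  ring

lemma integral_legendreP_succ (m : ℕ) (a : ℝ) :
    ∫ t in a..1, legendreP (m + 1) t = (legendreP m a - legendreP (m + 2) a) / (2 * m + 3) := by
  have hcont : Continuous (legendreP (m + 1)) := by
    unfold legendreP
    fun_prop
  rw [intervalIntegral.integral_eq_sub_of_hasDerivAt
      (fun t _ => hasDerivAt_legendreAntideriv m t) (hcont.intervalIntegrable _ _),
    legendreAntideriv_one, eq_div_iff (by positivity)]
  linear_combination legendreP_add_two_sub_legendreP m a

lemma crossCorr_eq_intervalIntegral (i j : ℕ) {x : ℝ} (hx : x ≤ 1) :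
    crossCorr i j x = ∫ y in (0 : ℝ)..1 - x, scalingFn i (x + y) * scalingFn j y := by
  have hsupp : ∀ y ∉ Set.Icc 0 (1 - x), scalingFn i (x + y) * scalingFn j y = 0 := by
    intro y hy
    rcases not_and_or.mp hy with hy0 | hy1
    · simp [scalingFn, show ¬ 0 ≤ y from hy0]
    · simp [scalingFn, show ¬ x + y ≤ 1 by linarith]
  rw [crossCorr, intervalIntegral.integral_of_le (by linarith), ← integral_Icc_eq_integral_Ioc,
    setIntegral_eq_integral_of_forall_compl_eq_zero hsupp]

lemma crossCorr_zero_right (l : ℕ) {x : ℝ} (hx0 : 0 ≤ x) (hx1 : x ≤ 1) :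
    crossCorr l 0 x = √(2 * l + 1) / 2 * ∫ t in (2 * x - 1)..1, legendreP l t := by
  have hcongr : Set.EqOn (fun y => scalingFn l (x + y) * scalingFn 0 y)
      (fun y => √(2 * l + 1) * legendreP l (2 * y + (2 * x - 1))) (Set.uIcc 0 (1 - x)) := by
    intro y hy
    rw [Set.uIcc_of_le (by linarith)] at hy
    have hxy : x + y ∈ Set.Icc (0 : ℝ) 1 := ⟨by linarith [hy.1], by linarith [hy.2]⟩
    have hy' : y ∈ Set.Icc (0 : ℝ) 1 := ⟨hy.1, by linarith [hy.2]⟩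
    simp only [scalingFn, if_pos hxy, if_pos hy', legendreP_zero]
    ring_nf
  rw [crossCorr_eq_intervalIntegral l 0 hx1, intervalIntegral.integral_congr hcongr,
    intervalIntegral.integral_const_mul, intervalIntegral.integral_comp_mul_add _ two_ne_zero]
  ring_nf

/-- Connection with (Gegenbauer, equivalently differences of) Legendre polynomials:
on `[0,1]`, `Φ_{00}(x) = 1 - x` and, for `l ≥ 1`,
`Φ_{l0}(x) = (P_{l-1}(2x-1) - P_{l+1}(2x-1)) / (2 √(2l+1))`. -/
theorem crossCorr_l0_formula :
    (∀ x : ℝ, 0 ≤ x → x ≤ 1 → crossCorr 0 0 x = 1 - x) ∧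
    (∀ l : ℕ, 1 ≤ l → ∀ x : ℝ, 0 ≤ x → x ≤ 1 →
      crossCorr l 0 x =
        (legendreP (l - 1) (2 * x - 1) - legendreP (l + 1) (2 * x - 1)) /
          (2 * Real.sqrt (2 * (l : ℝ) + 1))) := by
  refine ⟨fun x hx0 hx1 => ?_, fun l hl x hx0 hx1 => ?_⟩
  · simp only [crossCorr_zero_right 0 hx0 hx1, legendreP_zero, intervalIntegral.integral_const]
    norm_num
    ring
  · obtain ⟨m, rfl⟩ := Nat.exists_eq_add_of_le' hl
    have hsq : √(2 * ((m + 1 : ℕ) : ℝ) + 1) ^ 2 = 2 * m + 3 := by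
      rw [Real.sq_sqrt (by positivity)]
      push_cast
      ring
    have hpos : 0 < √(2 * ((m + 1 : ℕ) : ℝ) + 1) := Real.sqrt_pos.mpr (by positivity)
    rw [crossCorr_zero_right _ hx0 hx1, integral_legendreP_succ, Nat.add_sub_cancel, ← hsq]
    field_simp
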